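/- Define S(m) for a positive integer m by S(1) = 1 and S(m) = Σ p_i^{α_i} where m = Π p_i^{α_i} is the prime factorization. Then the alternating group A_n contains an element of order m if and only if S(m) ≤ n when m is odd, and S(m) ≤ n − 2 when m is even. -/

import Mathlib

/-!
An element of `Sym(n)` with cycle type `C` (a multiset of integers `≥ 2` with `C.sum ≤ n`) has
order `C.lcm`, and it is even iff `C` has an even number of even entries. The sum
`S(m) = ∑ p ^ v_p(m)` of the prime-power parts of `m` is subadditive on `lcm` and satisfies
`S(a) ≤ a`, so `S(C.lcm) ≤ C.sum`; conversely the prime-power parts of an odd `m` form an even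
cycle type of order `m`. For even `m` a cycle type of order `m` has an even entry, hence two even
entries `a, b`, and `S(lcm a b) + 2 ≤ a + b`: removing the 2-part of the one with the smaller
2-adic valuation leaves the `lcm` unchanged and costs at least 2. Conversely, adding a
transposition to the prime-power parts of an even `m` fixes the parity.
-/

/-- `Sfun m` is the sum of the maximal prime-power divisors of `m`, with `Sfun 1 = 1`. -/
def Sfun (m : ℕ) : ℕ :=
  if m = 1 then 1 else ∑ p ∈ m.primeFactors, p ^ m.factorization p

theorem Finset.sum_le_prod_of_two_le {ι : Type*} {s : Finset ι} {f : ι → ℕ}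
    (hf : ∀ i ∈ s, 2 ≤ f i) : ∑ i ∈ s, f i ≤ ∏ i ∈ s, f i := by
  classical
  induction s using Finset.induction_on with
  | empty => simp
  | insert a s ha ih =>
    rw [Finset.sum_insert ha, Finset.prod_insert ha]
    have hfa := hf a (Finset.mem_insert_self a s)
    have ih := ih fun i hi => hf i (Finset.mem_insert_of_mem hi)
    rcases s.eq_empty_or_nonempty with rfl | ⟨i, hi⟩
    · simp
    · have hs : 2 ≤ ∑ j ∈ s, f j := (hf i (Finset.mem_insert_of_mem hi)).trans
        (Finset.single_le_sum (fun _ _ => Nat.zero_le _) hi)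
      nlinarith

namespace Nat

-- The paper's `S(m)` for `m ≠ 1`; the empty sum makes `ordProjSum 1 = 0`.
def ordProjSum (m : ℕ) : ℕ := ∑ p ∈ m.primeFactors, ordProj[p] m

@[simp] theorem ordProjSum_zero : ordProjSum 0 = 0 := by simp [ordProjSum]

@[simp] theorem ordProjSum_one : ordProjSum 1 = 0 := by simp [ordProjSum]

theorem ordProjSum_pos {m : ℕ} (hm : 1 < m) : 0 < ordProjSum m :=
  Finset.sum_pos (fun p _ => ordProj_pos m p) (nonempty_primeFactors.2 hm)

theorem two_le_ordProj_of_mem_primeFactors {m p : ℕ} (hp : p ∈ m.primeFactors) :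
    2 ≤ ordProj[p] m := by
  obtain ⟨pp, hpm, hm⟩ := mem_primeFactors.1 hp
  exact pp.two_le.trans (le_of_dvd (ordProj_pos m p) (dvd_ordProj_of_dvd hm pp hpm))

theorem ordProjSum_le_self (m : ℕ) : ordProjSum m ≤ m := by
  rcases eq_or_ne m 0 with rfl | hm
  · simp
  calc ordProjSum m ≤ ∏ p ∈ m.primeFactors, ordProj[p] m :=
        Finset.sum_le_prod_of_two_le fun _ => two_le_ordProj_of_mem_primeFactors
    _ = m := prod_factorization_pow_eq_self hm

theorem ordProjSum_eq_sum_of_subset {m : ℕ} {s : Finset ℕ} (h : m.primeFactors ⊆ s) :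
    ordProjSum m = ∑ p ∈ s, if p ∈ m.primeFactors then ordProj[p] m else 0 := by
  rw [Finset.sum_ite_mem, Finset.inter_eq_right.2 h, ordProjSum]

theorem ordProjSum_lcm_le (a b : ℕ) : ordProjSum (lcm a b) ≤ ordProjSum a + ordProjSum b := by
  rcases eq_or_ne a 0 with rfl | ha
  · simp
  rcases eq_or_ne b 0 with rfl | hb
  · simp
  have hab : lcm a b ≠ 0 := lcm_ne_zero ha hb
  rw [ordProjSum, ordProjSum_eq_sum_of_subset (primeFactors_mono (dvd_lcm_left a b) hab),
    ordProjSum_eq_sum_of_subset (primeFactors_mono (dvd_lcm_right a b) hab),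
    ← Finset.sum_add_distrib]
  refine Finset.sum_le_sum fun p hp => ?_
  rw [← support_factorization, Finsupp.mem_support_iff] at hp
  simp only [← support_factorization, Finsupp.mem_support_iff]
  rw [factorization_lcm ha hb, Finsupp.sup_apply] at hp ⊢
  rcases max_choice (a.factorization p) (b.factorization p) with h | h <;>
    rw [h] at hp ⊢ <;> simp [hp]


theorem lcm_ordCompl_eq_lcm {a b p : ℕ} (h : b.factorization p ≤ a.factorization p) :
    lcm a (ordCompl[p] b) = lcm a b := by
  rcases eq_or_ne a 0 with rfl | ha
  · simp
  rcases eq_or_ne b 0 with rfl | hb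
  · simp
  have hb' : ordCompl[p] b ≠ 0 := (ordCompl_pos p hb).ne'
  refine eq_of_factorization_eq (lcm_ne_zero ha hb') (lcm_ne_zero ha hb) fun q => ?_
  rw [factorization_lcm ha hb', factorization_lcm ha hb, factorization_ordCompl]
  rcases eq_or_ne q p with rfl | hq
  · simp [h]
  · simp [hq]

theorem ordProjSum_ordCompl_two_add_two_le {b : ℕ} (hb : Even b) (hb0 : b ≠ 0) :
    ordProjSum (ordCompl[2] b) + 2 ≤ b := by
  have h2 : 2 ≤ ordProj[2] b :=
    two_le_ordProj_of_mem_primeFactors (mem_primeFactors.2 ⟨prime_two, hb.two_dvd, hb0⟩)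
  calc ordProjSum (ordCompl[2] b) + 2 ≤ ordProj[2] b * ordCompl[2] b := by
        obtain h1 | h2d : ordCompl[2] b = 1 ∨ 2 ≤ ordCompl[2] b := by
          have := ordCompl_pos 2 hb0
          omega
        · rw [h1]
          simpa using h2
        · nlinarith [ordProjSum_le_self (ordCompl[2] b)]
    _ = b := ordProj_mul_ordCompl_eq_self b 2

theorem ordProjSum_lcm_add_two_le {a b : ℕ} (ha : Even a) (hb : Even b) (ha0 : a ≠ 0)
    (hb0 : b ≠ 0) : ordProjSum (lcm a b) + 2 ≤ a + b := by
  wlog h : b.factorization 2 ≤ a.factorization 2 generalizing a b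
  · rw [Nat.lcm_comm, Nat.add_comm a b]
    exact this hb ha hb0 ha0 (le_of_not_ge h)
  rw [← lcm_ordCompl_eq_lcm h]
  have := ordProjSum_lcm_le a (ordCompl[2] b)
  have := ordProjSum_le_self a
  have := ordProjSum_ordCompl_two_add_two_le hb hb0
  omega

def primePowerParts (m : ℕ) : Multiset ℕ := m.primeFactors.val.map fun p => ordProj[p] m

theorem sum_primePowerParts (m : ℕ) : (primePowerParts m).sum = ordProjSum m := rfl

theorem two_le_of_mem_primePowerParts {m a : ℕ} (ha : a ∈ primePowerParts m) : 2 ≤ a := by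
  obtain ⟨p, hp, rfl⟩ := Multiset.mem_map.1 ha
  exact two_le_ordProj_of_mem_primeFactors hp

theorem lcm_primePowerParts {m : ℕ} (hm : m ≠ 0) : (primePowerParts m).lcm = m :=
  (Finset.lcm_eq_prod fun _ hp _ hq hpq =>
    coprime_pow_primes _ _ (prime_of_mem_primeFactors hp) (prime_of_mem_primeFactors hq) hpq)
    |>.trans (prod_factorization_pow_eq_self hm)

theorem card_filter_even_primePowerParts {m : ℕ} (hm : m ≠ 0) :
    Multiset.card ((primePowerParts m).filter Even) = if Even m then 1 else 0 := by
  have : m.primeFactors.filter (fun p => Even (ordProj[p] m)) = m.primeFactors.filter (· = 2) :=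
    Finset.filter_congr fun p hp => by
      rw [even_pow' (Finsupp.mem_support_iff.1 hp), (prime_of_mem_primeFactors hp).even_iff]
  rw [primePowerParts, Multiset.filter_map, Multiset.card_map]
  change (m.primeFactors.filter fun p => Even (ordProj[p] m)).card = _
  rw [this, Finset.filter_eq']
  by_cases h : Even m <;> simp [h, hm, prime_two, mem_primeFactors, ← even_iff_two_dvd]

end Nat

namespace Multiset

theorem ordProjSum_lcm_le_sum (C : Multiset ℕ) : Nat.ordProjSum C.lcm ≤ C.sum := by
  induction C using Multiset.induction_on with
  | empty => simp
  | cons a C ih =>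
    rw [lcm_cons, sum_cons]
    exact (Nat.ordProjSum_lcm_le a C.lcm).trans (add_le_add (Nat.ordProjSum_le_self a) ih)

theorem exists_mem_dvd_of_prime_dvd_lcm {α : Type*} [CommMonoidWithZero α]
    [NormalizedGCDMonoid α] {C : Multiset α} {p : α} (hp : Prime p) (h : p ∣ C.lcm) :
    ∃ a ∈ C, p ∣ a :=
  hp.exists_mem_multiset_dvd (h.trans (lcm_dvd.2 fun _ => dvd_prod))

theorem exists_eq_cons_cons_of_two_le_card_filter {α : Type*} {p : α → Prop} [DecidablePred p]
    {s : Multiset α} (h : 2 ≤ card (s.filter p)) :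
    ∃ a b t, p a ∧ p b ∧ s = a ::ₘ b ::ₘ t := by
  obtain ⟨a, ha⟩ := card_pos_iff_exists_mem.1 (by omega : 0 < card (filter p s))
  obtain ⟨u, hu⟩ := exists_cons_of_mem ha
  rw [hu, card_cons] at h
  obtain ⟨b, hb⟩ := card_pos_iff_exists_mem.1 (by omega : 0 < card u)
  obtain ⟨v, rfl⟩ := exists_cons_of_mem hb
  obtain ⟨w, hw⟩ := le_iff_exists_add.1 (hu ▸ filter_le p s)
  have hpab : ∀ x ∈ a ::ₘ b ::ₘ v, p x := fun x hx => (mem_filter.1 (hu ▸ hx)).2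
  exact ⟨a, b, v + w, hpab a (by simp), hpab b (by simp), by simp [hw]⟩

theorem even_sum_add_card_iff (C : Multiset ℕ) :
    Even (C.sum + card C) ↔ Even (card (C.filter Even)) := by
  induction C using Multiset.induction_on with
  | empty => simp
  | cons a C ih =>
    have : (a ::ₘ C).sum + card (a ::ₘ C) = (C.sum + card C) + (a + 1) := by simp; ring
    rw [this, Nat.even_add, ih, Nat.even_add_one]
    by_cases ha : Even a
    · simp [filter_cons_of_pos _ ha, Nat.even_add_one, ha]
    · simp [filter_cons_of_neg _ ha, ha]

theorem ordProjSum_lcm_add_two_le_sum {C : Multiset ℕ} (h0 : 0 ∉ C)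
    (h : 2 ≤ card (C.filter Even)) : Nat.ordProjSum C.lcm + 2 ≤ C.sum := by
  obtain ⟨a, b, R, ha, hb, rfl⟩ := exists_eq_cons_cons_of_two_le_card_filter h
  have ha0 : a ≠ 0 := fun h => h0 (by simp [h])
  have hb0 : b ≠ 0 := fun h => h0 (by simp [h])
  calc Nat.ordProjSum (a ::ₘ b ::ₘ R).lcm + 2
      = Nat.ordProjSum (Nat.lcm (Nat.lcm a b) R.lcm) + 2 := by
        simp only [lcm_cons, lcm_eq_nat_lcm, Nat.lcm_assoc]
    _ ≤ Nat.ordProjSum (Nat.lcm a b) + 2 + R.sum := by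
        have := Nat.ordProjSum_lcm_le (Nat.lcm a b) R.lcm
        have := R.ordProjSum_lcm_le_sum
        omega
    _ ≤ a + b + R.sum := by grw [Nat.ordProjSum_lcm_add_two_le ha hb ha0 hb0]
    _ = (a ::ₘ b ::ₘ R).sum := by simp [add_assoc]

end Multiset

namespace Equiv.Perm

variable {α : Type*} [Fintype α] [DecidableEq α]

theorem mem_alternatingGroup_iff_even_card_filter_even_cycleType (g : Perm α) :
    g ∈ alternatingGroup α ↔ Even (Multiset.card (g.cycleType.filter Even)) := by
  rw [mem_alternatingGroup, sign_of_cycleType, neg_one_pow_eq_one_iff_even (by decide),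
    Multiset.even_sum_add_card_iff]

theorem exists_alternatingGroup_orderOf_eq_iff {m : ℕ} :
    (∃ σ : alternatingGroup α, orderOf σ = m) ↔
      ∃ C : Multiset ℕ, (∀ a ∈ C, 2 ≤ a) ∧ C.sum ≤ Fintype.card α ∧ C.lcm = m ∧
        Even (Multiset.card (C.filter Even)) := by
  constructor
  · rintro ⟨⟨g, hg⟩, rfl⟩
    exact ⟨g.cycleType, fun _ => two_le_of_mem_cycleType, sum_cycleType_le g,
      by rw [lcm_cycleType, Subgroup.orderOf_mk],
      (mem_alternatingGroup_iff_even_card_filter_even_cycleType g).1 hg⟩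
  · rintro ⟨C, h2, hsum, rfl, hev⟩
    obtain ⟨g, rfl⟩ := (exists_with_cycleType_iff α).2 ⟨hsum, h2⟩
    exact ⟨⟨g, (mem_alternatingGroup_iff_even_card_filter_even_cycleType g).2 hev⟩,
      by rw [Subgroup.orderOf_mk, lcm_cycleType]⟩

theorem exists_alternatingGroup_orderOf_eq_iff_of_odd {m : ℕ} (hm : Odd m) :
    (∃ σ : alternatingGroup α, orderOf σ = m) ↔ Nat.ordProjSum m ≤ Fintype.card α := by
  rw [exists_alternatingGroup_orderOf_eq_iff]
  constructor
  · rintro ⟨C, -, hsum, rfl, -⟩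
    exact C.ordProjSum_lcm_le_sum.trans hsum
  · intro hle
    have hm0 : m ≠ 0 := hm.pos.ne'
    refine ⟨Nat.primePowerParts m, fun _ => Nat.two_le_of_mem_primePowerParts, hle,
      Nat.lcm_primePowerParts hm0, ?_⟩
    simp [Nat.card_filter_even_primePowerParts hm0, Nat.not_even_iff_odd.2 hm]

theorem exists_alternatingGroup_orderOf_eq_iff_of_even {m : ℕ} (hm0 : m ≠ 0) (hm : Even m) :
    (∃ σ : alternatingGroup α, orderOf σ = m) ↔
      Nat.ordProjSum m + 2 ≤ Fintype.card α := by
  rw [exists_alternatingGroup_orderOf_eq_iff]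
  constructor
  · rintro ⟨C, h2, hsum, rfl, hev⟩
    obtain ⟨c, hc, hc2⟩ := C.exists_mem_dvd_of_prime_dvd_lcm Nat.prime_two.prime hm.two_dvd
    have hpos : 0 < Multiset.card (C.filter Even) := Multiset.card_pos_iff_exists_mem.2
      ⟨c, Multiset.mem_filter.2 ⟨hc, even_iff_two_dvd.2 hc2⟩⟩
    have h2le : 2 ≤ Multiset.card (C.filter Even) := by obtain ⟨k, hk⟩ := hev; omega
    have h0 : 0 ∉ C := fun h0 => by simpa using h2 0 h0
    exact (C.ordProjSum_lcm_add_two_le_sum h0 h2le).trans hsum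
  · intro hle
    have hm2 : 2 ∣ m := hm.two_dvd
    refine ⟨2 ::ₘ Nat.primePowerParts m, ?_, ?_, ?_, ?_⟩
    · simpa using fun _ => Nat.two_le_of_mem_primePowerParts
    · simpa [Nat.sum_primePowerParts, add_comm] using hle
    · rw [Multiset.lcm_cons, Nat.lcm_primePowerParts hm0, lcm_eq_nat_lcm, Nat.lcm_eq_right hm2]
    · simp [Nat.card_filter_even_primePowerParts hm0, hm]

end Equiv.Perm

theorem stmt_4 (m n : ℕ) (hm : 1 ≤ m) (hn : 1 ≤ n) :
    (Odd m → ((∃ σ : alternatingGroup (Fin n), orderOf σ = m) ↔ Sfun m ≤ n)) ∧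
    (Even m → ((∃ σ : alternatingGroup (Fin n), orderOf σ = m) ↔ Sfun m ≤ n - 2)) := by
  refine ⟨fun hodd => ?_, fun heven => ?_⟩
  · rw [Equiv.Perm.exists_alternatingGroup_orderOf_eq_iff_of_odd hodd, Fintype.card_fin]
    rcases eq_or_ne m 1 with rfl | hm1
    · simpa [Sfun] using hn
    · rw [Sfun, if_neg hm1, Nat.ordProjSum]
  · have hm1 : 1 < m := by rcases heven with ⟨k, rfl⟩; omega
    rw [Equiv.Perm.exists_alternatingGroup_orderOf_eq_iff_of_even (by omega) heven,
      Fintype.card_fin, Sfun, if_neg hm1.ne', ← Nat.ordProjSum]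
    have := Nat.ordProjSum_pos hm1
    omega
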